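/- Let G be a finite simple undirected graph with T ≥ 1 four-cycles, let δ ∈ (0, 1/2] and let κ > 0 be a real number. Then at most 32δT four-cycles A of G contain a vertex v with t(v) ≥ κ√T/(2δ^{1.5}) and a vertex y with t(y) ≥ T/(κδ^{1.5}) such that (v,y) is an edge of A with t((v,y)) ≤ √T/δ². -/

import Mathlib

variable {V : Type*}

/-- `IsC4 G a b c d` : the four distinct vertices `a, b, c, d` trace a
four-cycle of `G` (in this cyclic order). -/
def IsC4 (G : SimpleGraph V) (a b c d : V) : Prop :=
  G.Adj a b ∧ G.Adj b c ∧ G.Adj c d ∧ G.Adj d a ∧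
    a ≠ b ∧ a ≠ c ∧ a ≠ d ∧ b ≠ c ∧ b ≠ d ∧ c ≠ d

/-- The four-cycles of `G`, each counted once as a subgraph: we take the unique
canonical representative `(a, b, c, d)` tracing the cycle with `a` minimal and
`b < d`. -/
def fourCycles [LinearOrder V] (G : SimpleGraph V) : Set (V × V × V × V) :=
  {t | IsC4 G t.1 t.2.1 t.2.2.1 t.2.2.2 ∧
    t.1 < t.2.1 ∧ t.1 < t.2.2.1 ∧ t.1 < t.2.2.2 ∧ t.2.1 < t.2.2.2}

/-- The vertices of a four-cycle. -/
def cycleVerts (t : V × V × V × V) : Set V := {t.1, t.2.1, t.2.2.1, t.2.2.2}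

/-- The edges of a four-cycle. -/
def cycleEdges (t : V × V × V × V) : Set (Sym2 V) :=
  {s(t.1, t.2.1), s(t.2.1, t.2.2.1), s(t.2.2.1, t.2.2.2), s(t.2.2.2, t.1)}

/-- The wedges (paths with two edges) of a four-cycle, each represented as a
pair (center vertex, unordered pair of endpoints). -/
def cycleWedges (t : V × V × V × V) : Set (V × Sym2 V) :=
  {(t.2.1, s(t.1, t.2.2.1)), (t.2.2.1, s(t.2.1, t.2.2.2)),
    (t.2.2.2, s(t.2.2.1, t.1)), (t.1, s(t.2.2.2, t.2.1))}

/-- The two pairs of opposite vertices of a four-cycle. -/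
def cycleOppPairs (t : V × V × V × V) : Set (Sym2 V) :=
  {s(t.1, t.2.2.1), s(t.2.1, t.2.2.2)}

/-- The vertices of a wedge. -/
def wedgeVerts (w : V × Sym2 V) : Set V := insert w.1 {x | x ∈ w.2}

/-- The two edges of a wedge. -/
def wedgeEdges (w : V × Sym2 V) : Set (Sym2 V) := {e | ∃ x ∈ w.2, e = s(w.1, x)}

/-- The heaviness of a vertex: the number of four-cycles of `G` containing it. -/
noncomputable def vertexHeaviness [LinearOrder V] (G : SimpleGraph V) (v : V) : ℕ :=
  {A ∈ fourCycles G | v ∈ cycleVerts A}.ncard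

/-- The heaviness of an edge: the number of four-cycles of `G` containing it. -/
noncomputable def edgeHeaviness [LinearOrder V] (G : SimpleGraph V) (e : Sym2 V) : ℕ :=
  {A ∈ fourCycles G | e ∈ cycleEdges A}.ncard

/-- The heaviness of a wedge: the number of four-cycles of `G` containing it. -/
noncomputable def wedgeHeaviness [LinearOrder V] (G : SimpleGraph V) (w : V × Sym2 V) : ℕ :=
  {A ∈ fourCycles G | w ∈ cycleWedges A}.ncard

/-- The onion width of a pair of vertices: the number of their common neighbours. -/
noncomputable def onionWidth (G : SimpleGraph V) (u v : V) : ℕ :=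
  {w | G.Adj u w ∧ G.Adj v w}.ncard

/-- The onion size of a pair of vertices: the number of four-cycles in which the
two vertices are opposite. -/
noncomputable def onionSize (G : SimpleGraph V) (u v : V) : ℕ :=
  Nat.choose (onionWidth G u v) 2

/-!
Every four-cycle has four vertices, so the vertex heavinesses sum to `4T`, and Markov's inequality
leaves at most `8δ^{1.5}√T/κ` candidates for `v` and at most `4κδ^{1.5}` candidates for `y`.
A counted cycle runs through a light edge `vy` between two candidates, and such an edge lies on at
most `√T/δ²` four-cycles, so there are at most `32δ³√T · √T/δ² = 32δT` of them.
-/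

open Finset

theorem card_filter_le_nsmul_le_sum {ι M : Type*} [AddCommMonoid M] [PartialOrder M]
    [IsOrderedAddMonoid M] [DecidableLE M] (s : Finset ι) (f : ι → M)
    (hf : ∀ i ∈ s, 0 ≤ f i) (c : M) :
    #{i ∈ s | c ≤ f i} • c ≤ ∑ i ∈ s, f i :=
  calc #{i ∈ s | c ≤ f i} • c ≤ ∑ i ∈ s with c ≤ f i, f i :=
        card_nsmul_le_sum _ _ _ fun _ hi => (mem_filter.mp hi).2
    _ ≤ ∑ i ∈ s, f i :=
        sum_le_sum_of_subset_of_nonneg (filter_subset _ _) fun i hi _ => hf i hi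

section FourCycles

variable [LinearOrder V] {G : SimpleGraph V}

theorem ncard_cycleVerts_of_mem_fourCycles {A : V × V × V × V} (hA : A ∈ fourCycles G) :
    (cycleVerts A).ncard = 4 := by
  obtain ⟨⟨-, -, -, -, hab, hac, had, hbc, hbd, hcd⟩, -⟩ := hA
  rw [cycleVerts, Set.ncard_insert_of_notMem (by simp [hab, hac, had]),
    Set.ncard_insert_of_notMem (by simp [hbc, hbd]), Set.ncard_pair hcd]

theorem sum_vertexHeaviness [Fintype V] :
    ∑ v, vertexHeaviness G v = 4 * (fourCycles G).ncard := by
  classical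
  have hC := (fourCycles G).toFinite
  let r : V → V × V × V × V → Prop := fun v A => v ∈ cycleVerts A
  calc ∑ v, vertexHeaviness G v = ∑ v, #(hC.toFinset.bipartiteAbove r v) := by
        refine sum_congr rfl fun v _ => ?_
        rw [vertexHeaviness, ← Set.ncard_coe_finset]
        congr 1; ext A; simp [bipartiteAbove, r]
    _ = ∑ A ∈ hC.toFinset, #(univ.bipartiteBelow r A) :=
        sum_card_bipartiteAbove_eq_sum_card_bipartiteBelow _
    _ = ∑ A ∈ hC.toFinset, 4 := by
        refine sum_congr rfl fun A hA => ?_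
        rw [← ncard_cycleVerts_of_mem_fourCycles (hC.mem_toFinset.mp hA),
          ← Set.ncard_coe_finset]
        congr 1; ext v; simp [bipartiteBelow, r]
    _ = 4 * (fourCycles G).ncard := by
        rw [sum_const, smul_eq_mul, mul_comm, Set.ncard_eq_toFinset_card _ hC]

theorem card_heavyVertices_mul_le [Fintype V] (c : ℝ) :
    (#{v | c ≤ (vertexHeaviness G v : ℝ)} : ℝ) * c ≤ 4 * (fourCycles G).ncard := by
  have := card_filter_le_nsmul_le_sum univ (fun v => (vertexHeaviness G v : ℝ))
    (fun _ _ => by positivity) c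
  rw [nsmul_eq_mul, ← Nat.cast_sum, sum_vertexHeaviness] at this
  exact_mod_cast this

theorem ncard_fourCycles_through_light_edge_le [Finite V] (X Y : Finset V) {m : ℝ}
    (hm : 0 ≤ m) :
    ({A ∈ fourCycles G | ∃ v ∈ X, ∃ y ∈ Y, s(v, y) ∈ cycleEdges A ∧
        (edgeHeaviness G s(v, y) : ℝ) ≤ m}.ncard : ℝ) ≤ #X * #Y * m := by
  classical
  let P := {q ∈ X ×ˢ Y | (edgeHeaviness G s(q.1, q.2) : ℝ) ≤ m}
  have hcover : {A ∈ fourCycles G | ∃ v ∈ X, ∃ y ∈ Y, s(v, y) ∈ cycleEdges A ∧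
      (edgeHeaviness G s(v, y) : ℝ) ≤ m} ⊆
      ⋃ q ∈ P, {A ∈ fourCycles G | s(q.1, q.2) ∈ cycleEdges A} := by
    rintro A ⟨hA, v, hv, y, hy, hvy, hlight⟩
    exact Set.mem_biUnion (x := (v, y)) (by simp [P, hv, hy, hlight]) ⟨hA, hvy⟩
  calc _ ≤ (∑ q ∈ P, edgeHeaviness G s(q.1, q.2) : ℝ) := by
        exact_mod_cast (Set.ncard_le_ncard hcover (Set.toFinite _)).trans
          (P.set_ncard_biUnion_le _)
    _ ≤ ∑ _q ∈ P, m := sum_le_sum fun q hq => (mem_filter.mp hq).2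
    _ ≤ #X * #Y * m := by
        rw [sum_const, nsmul_eq_mul, ← Nat.cast_mul, ← card_product]
        gcongr
        exact filter_subset _ _

end FourCycles

theorem mul_mul_sqrt_div_sq_le {a b T κ δ : ℝ} (hb : 0 ≤ b) (hT : 0 ≤ T)
    (hκ : 0 < κ) (hδ : 0 < δ)
    (haT : a * (κ * √T / (2 * δ ^ (1.5:ℝ))) ≤ 4 * T)
    (hbT : b * (T / (κ * δ ^ (1.5:ℝ))) ≤ 4 * T) :
    a * b * (√T / δ ^ 2) ≤ 32 * δ * T := by
  rcases hT.eq_or_lt with rfl | hTpos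
  · simp
  set p := δ ^ (1.5:ℝ)
  have hpp : p ^ 2 = δ ^ 3 := by
    rw [← Real.rpow_natCast, ← Real.rpow_mul hδ.le,
      show (1.5 : ℝ) * (2 : ℕ) = (3 : ℕ) by norm_num, Real.rpow_natCast]
  have ha' : a * √T ≤ 8 * T * p / κ := by
    rw [le_div_iff₀ hκ]
    rw [← mul_div_assoc, div_le_iff₀ (by positivity)] at haT
    linarith
  have hb' : b ≤ 4 * κ * p := by
    rw [← mul_div_assoc, div_le_iff₀ (by positivity)] at hbT
    nlinarith
  calc a * b * (√T / δ ^ 2) = a * √T * b / δ ^ 2 := by ring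
    _ ≤ 8 * T * p / κ * (4 * κ * p) / δ ^ 2 := by gcongr
    _ = 32 * δ * T := by field_simp; linear_combination 32 * hpp

theorem fourCycles_heavy_vertex_adjacent_heavy_vertex_le_general {V : Type*} [Fintype V]
    [LinearOrder V] (G : SimpleGraph V)
    (T : ℕ) (hT : T = (fourCycles G).ncard)
    (δ : ℝ) (hδ0 : 0 < δ) (κ : ℝ) (hκ : 0 < κ) :
    ({A ∈ fourCycles G | ∃ v y : V,
        κ * Real.sqrt T / (2 * δ ^ (1.5:ℝ)) ≤ (vertexHeaviness G v : ℝ) ∧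
        (T : ℝ) / (κ * δ ^ (1.5:ℝ)) ≤ (vertexHeaviness G y : ℝ) ∧
        s(v, y) ∈ cycleEdges A ∧
        (edgeHeaviness G s(v, y) : ℝ) ≤ Real.sqrt T / δ ^ 2}.ncard : ℝ)
      ≤ 32 * δ * T := by
  classical
  let X : Finset V := {v | κ * √T / (2 * δ ^ (1.5:ℝ)) ≤ (vertexHeaviness G v : ℝ)}
  let Y : Finset V := {y | (T : ℝ) / (κ * δ ^ (1.5:ℝ)) ≤ (vertexHeaviness G y : ℝ)}
  calc _ = ({A ∈ fourCycles G | ∃ v ∈ X, ∃ y ∈ Y, s(v, y) ∈ cycleEdges A ∧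
          (edgeHeaviness G s(v, y) : ℝ) ≤ √T / δ ^ 2}.ncard : ℝ) := by
        simp only [X, Y, mem_filter, mem_univ, true_and, exists_and_left]
    _ ≤ #X * #Y * (√T / δ ^ 2) := ncard_fourCycles_through_light_edge_le X Y (by positivity)
    _ ≤ 32 * δ * T := by
        subst hT
        exact mul_mul_sqrt_div_sq_le (Nat.cast_nonneg _) (Nat.cast_nonneg _) hκ hδ0
          (card_heavyVertices_mul_le _) (card_heavyVertices_mul_le _)

/-- If `G` has `T ≥ 1` four-cycles, `δ ∈ (0, 1/2]` and `κ > 0`, then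
at most `32δT` four-cycles `A` of `G` contain a vertex `v` with `t(v) ≥ κ√T/(2δ^{1.5})`
and a vertex `y` with `t(y) ≥ T/(κδ^{1.5})` such that `(v,y)` is an edge of `A` with
`t((v,y)) ≤ √T/δ²`. -/
theorem fourCycles_heavy_vertex_adjacent_heavy_vertex_le {V : Type*} [Fintype V]
    [LinearOrder V] (G : SimpleGraph V)
    (T : ℕ) (hT : T = (fourCycles G).ncard) (hT1 : 1 ≤ T)
    (δ : ℝ) (hδ0 : 0 < δ) (hδ1 : δ ≤ 1 / 2) (κ : ℝ) (hκ : 0 < κ) :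
    ({A ∈ fourCycles G | ∃ v y : V,
        κ * Real.sqrt T / (2 * δ ^ (1.5:ℝ)) ≤ (vertexHeaviness G v : ℝ) ∧
        (T : ℝ) / (κ * δ ^ (1.5:ℝ)) ≤ (vertexHeaviness G y : ℝ) ∧
        s(v, y) ∈ cycleEdges A ∧
        (edgeHeaviness G s(v, y) : ℝ) ≤ Real.sqrt T / δ ^ 2}.ncard : ℝ)
      ≤ 32 * δ * T :=
  fourCycles_heavy_vertex_adjacent_heavy_vertex_le_general G T hT δ hδ0 κ hκ
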